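/- arXiv:math-ph/0103017 — 6 statements merged into one kernel-verified Lean document; each statement's English description precedes it below -/
import Mathlib

section
/- Let B be a number operator algebra of finite type, i.e., B is Z^n-graded as B = ⊕_{p ∈ Z^n} B^p where B^p = {y ∈ B : [N_i, y] = p(i)·y for all i}, with N_i ∈ B for each i. If the components of each N_j satisfy N_j = Σ_p N_j^p with [N_i, N_j] central, then [N_i, N_j] = 0 for all i, j. -/
/-!
`ad (N i)` acts on `B^p` as multiplication by `p i`, so it preserves every graded piece and kills
`B^0`; hence the `B^0`-component of `ad (N i) (N j)` is `ad (N i)` of the `B^0`-component of `N j`,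
which is `0`. A central element commutes with every `N k`, so `[N i, N j]` lies in `B^0` and is
its own `B^0`-component.
-/

namespace DirectSum

variable {ι M σ : Type*} [DecidableEq ι] [AddCommMonoid M] [SetLike σ M] [AddSubmonoidClass σ M]
  (ℳ : ι → σ) [Decomposition ℳ]

theorem decompose_map_of_mapsTo (f : M →+ M) (hf : ∀ i, ∀ x ∈ ℳ i, f x ∈ ℳ i) (x : M) (i : ι) :
    (decompose ℳ (f x) i : M) = f (decompose ℳ x i) := by
  induction x using Decomposition.inductionOn ℳ with
  | zero => simp
  | @homogeneous j m =>
    obtain rfl | hji := eq_or_ne j i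
    · rw [decompose_of_mem_same ℳ (hf j m m.2), decompose_of_mem_same ℳ m.2]
    · rw [decompose_of_mem_ne ℳ (hf j m m.2) hji, decompose_of_mem_ne ℳ m.2 hji, map_zero]
  | add x y hx hy => simp [decompose_add, hx, hy]

theorem map_eq_zero_of_mem_of_mapsTo (f : M →+ M) (hf : ∀ i, ∀ x ∈ ℳ i, f x ∈ ℳ i) {i : ι}
    (hi : ∀ x ∈ ℳ i, f x = 0) {x : M} (hfx : f x ∈ ℳ i) : f x = 0 := by
  rw [← decompose_of_mem_same ℳ hfx, decompose_map_of_mapsTo ℳ f hf]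
  exact hi _ (decompose ℳ x i).2

end DirectSum

theorem stmt_2_general (K : Type*) [Field K] (n : ℕ)
    (B : Type*) [Ring B] [Algebra K B]
    (N : Fin n → B)
    (Bp : (Fin n → ℤ) → Submodule K B)
    (hBp : ∀ p, (Bp p : Set B) = {y | ∀ i, N i * y - y * N i = (p i) • y})
    (hdec : DirectSum.IsInternal Bp)
    (hcentral : ∀ i j, (N i * N j - N j * N i) ∈ Set.center B) :
    ∀ i j, N i * N j - N j * N i = 0 := by
  let := hdec.chooseDecomposition
  intro i j
  have hmem (p : Fin n → ℤ) (y : B) : y ∈ Bp p ↔ ∀ k, N k * y - y * N k = p k • y :=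
    Set.ext_iff.mp (hBp p) y
  let ad : B →+ B := AddMonoidHom.mulLeft (N i) - AddMonoidHom.mulRight (N i)
  have ad_apply_of_mem (p) (y) (hy : y ∈ Bp p) : ad y = p i • y := (hmem p y).mp hy i
  have hcomm_mem_zero : ad (N j) ∈ Bp 0 := by
    refine (hmem 0 _).mpr fun k ↦ ?_
    rw [Pi.zero_apply, zero_smul, sub_eq_zero]
    exact ((Set.mem_center_iff.mp (hcentral i j)).comm (N k)).symm
  refine DirectSum.map_eq_zero_of_mem_of_mapsTo Bp ad (fun p y hy ↦ ?_) (fun y hy ↦ ?_)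
    hcomm_mem_zero
  · rw [ad_apply_of_mem p y hy]
    exact zsmul_mem hy _
  · rw [ad_apply_of_mem 0 y hy, Pi.zero_apply, zero_smul]

/-- Let `B` be a `K`-algebra which is `ℤ^n`-graded by the joint eigenspaces
`B^p = {y | [N i, y] = p i • y}` of the commuting operators `ad (N i)`, i.e. the
submodules `Bp p` form an internal direct sum decomposition of `B`. If every
commutator `[N i, N j]` is central, then `[N i, N j] = 0` for all `i, j`. -/
theorem stmt_2 (K : Type*) [Field K] [CharZero K] (n : ℕ)
    (B : Type*) [Ring B] [Algebra K B]
    (N : Fin n → B)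
    (Bp : (Fin n → ℤ) → Submodule K B)
    (hBp : ∀ p, (Bp p : Set B) = {y | ∀ i, N i * y - y * N i = (p i) • y})
    (hdec : DirectSum.IsInternal Bp)
    (hcentral : ∀ i j, (N i * N j - N j * N i) ∈ Set.center B) :
    ∀ i j, N i * N j - N j * N i = 0 :=
  stmt_2_general K n B N Bp hBp hdec hcentral
end

section
/- In the free algebra K⟨a, a^+⟩ with the degree-lexicographic ordering induced by a^+ < a, the reduction system S = {a² → 0, (a^+)² → 0, a·a^+ → 1 − a^+·a} is confluent, and the set {1, a, a^+, a^+·a} of irreducible monomials is a K-basis of the quotient algebra B = K⟨a, a^+⟩ / ⟨a², (a^+)², a·a^+ + a^+·a − 1⟩. -/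
open FreeAlgebra

/-- The relations `a² = 0`, `(a⁺)² = 0`, `a·a⁺ = 1 - a⁺·a` (equivalently
`a·a⁺ + a⁺·a = 1`) on the free algebra `K⟨a, a⁺⟩`, where `a = ι 0` and `a⁺ = ι 1`. -/
inductive Rel3 (K : Type) [Field K] :
    FreeAlgebra K (Fin 2) → FreeAlgebra K (Fin 2) → Prop
  | asq : Rel3 K (ι K (0 : Fin 2) * ι K (0 : Fin 2)) 0
  | apsq : Rel3 K (ι K (1 : Fin 2) * ι K (1 : Fin 2)) 0
  | cross : Rel3 K (ι K (0 : Fin 2) * ι K (1 : Fin 2))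
      (1 - ι K (1 : Fin 2) * ι K (0 : Fin 2))

noncomputable section

variable (K : Type) [Field K]

def fgen : Fin 2 → Matrix (Fin 2) (Fin 2) K := ![!![0,1;0,0], !![0,0;1,0]]

def F : FreeAlgebra K (Fin 2) →ₐ[K] Matrix (Fin 2) (Fin 2) K :=
  FreeAlgebra.lift K (fgen K)

lemma F_rel : ∀ ⦃x y⦄, Rel3 K x y → F K x = F K y := by
  intro x y h
  cases h <;>
    simp [F, fgen, FreeAlgebra.lift_ι_apply] <;>
    ext i j <;> fin_cases i <;> fin_cases j <;>
    simp [Matrix.mul_apply, Fin.sum_univ_two]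

def φ : RingQuot (Rel3 K) →ₐ[K] Matrix (Fin 2) (Fin 2) K :=
  RingQuot.liftAlgHom K ⟨F K, F_rel K⟩

end

/-- The irreducible monomials `1, a, a⁺, a⁺a` form a `K`-basis of
`B = K⟨a, a⁺⟩/⟨a², (a⁺)², a a⁺ + a⁺ a - 1⟩`. -/
theorem stmt_3 (K : Type) [Field K] [CharZero K] :
    ∃ b : Module.Basis (Fin 4) K (RingQuot (Rel3 K)),
      b 0 = 1 ∧
      b 1 = RingQuot.mkAlgHom K (Rel3 K) (ι K (0 : Fin 2)) ∧
      b 2 = RingQuot.mkAlgHom K (Rel3 K) (ι K (1 : Fin 2)) ∧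
      b 3 = RingQuot.mkAlgHom K (Rel3 K) (ι K (1 : Fin 2)) *
            RingQuot.mkAlgHom K (Rel3 K) (ι K (0 : Fin 2)) := by
  set mk := RingQuot.mkAlgHom K (Rel3 K) with hmk
  set A := mk (ι K (0 : Fin 2)) with hA0
  set P := mk (ι K (1 : Fin 2)) with hP0
  have hAA : A * A = 0 := by
    rw [hA0, ← map_mul, RingQuot.mkAlgHom_rel K Rel3.asq, map_zero]
  have hPP : P * P = 0 := by
    rw [hP0, ← map_mul, RingQuot.mkAlgHom_rel K Rel3.apsq, map_zero]
  have hAP : A * P = 1 - P * A := by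
    rw [hA0, hP0, ← map_mul, RingQuot.mkAlgHom_rel K Rel3.cross]
    simp
    rfl
  set v : Fin 4 → RingQuot (Rel3 K) := ![1, A, P, P * A] with hv
  -- linear independence via φ
  have hφv : ∀ i, φ K (v i) = ![1, !![0,1;0,0], !![0,0;1,0], !![0,0;0,1]] i := by
    have hφA : φ K A = !![0,1;0,0] := by
      rw [hA0, hmk]
      simp [φ, RingQuot.liftAlgHom_mkAlgHom_apply, F, fgen, FreeAlgebra.lift_ι_apply]
    have hφP : φ K P = !![0,0;1,0] := by
      rw [hP0, hmk]
      simp [φ, RingQuot.liftAlgHom_mkAlgHom_apply, F, fgen, FreeAlgebra.lift_ι_apply]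
    intro i
    fin_cases i <;>
      simp [hv, hφA, hφP] <;>
      ext i <;> fin_cases i <;>
      simp [Matrix.mul_apply, Fin.sum_univ_two]
  have hli : LinearIndependent K v := by
    apply LinearIndependent.of_comp (φ K).toLinearMap
    rw [Fintype.linearIndependent_iff]
    intro g hg i
    simp only [Function.comp_apply, AlgHom.toLinearMap_apply] at hg
    simp only [hφv] at hg
    rw [Fin.sum_univ_four] at hg
    have h00 := congrFun (congrFun hg 0) 0
    have h01 := congrFun (congrFun hg 0) 1
    have h10 := congrFun (congrFun hg 1) 0
    have h11 := congrFun (congrFun hg 1) 1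
    simp [Matrix.one_apply] at h00 h01 h10 h11
    fin_cases i <;> simp_all
  -- spanning
  set S := Submodule.span K (Set.range v) with hS
  have hmem : ∀ i, v i ∈ S := fun i => Submodule.subset_span ⟨i, rfl⟩
  have h1 : (1 : RingQuot (Rel3 K)) ∈ S := hmem 0
  have hAm : A ∈ S := hmem 1
  have hPm : P ∈ S := hmem 2
  have hPAm : P * A ∈ S := hmem 3
  have hmul : ∀ x ∈ S, ∀ y ∈ S, x * y ∈ S := by
    intro x hx y hy
    induction hx using Submodule.span_induction with
    | mem x hx =>
      induction hy using Submodule.span_induction with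
      | mem y hy =>
        obtain ⟨i, rfl⟩ := hx
        obtain ⟨j, rfl⟩ := hy
        fin_cases i <;> fin_cases j <;> simp [hv]
        · exact h1
        · exact hAm
        · exact hPm
        · exact hPAm
        · exact hAm
        · rw [hAA]; exact S.zero_mem
        · rw [hAP]; exact S.sub_mem h1 hPAm
        · rw [← mul_assoc, hAP, sub_mul, one_mul, mul_assoc, hAA, mul_zero, sub_zero]
          exact hAm
        · exact hPm
        · exact hPAm
        · rw [hPP]; exact S.zero_mem
        · rw [← mul_assoc, hPP, zero_mul]; exact S.zero_mem
        · exact hPAm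
        · rw [mul_assoc, hAA, mul_zero]; exact S.zero_mem
        · rw [mul_assoc, hAP, mul_sub, mul_one, ← mul_assoc, hPP, zero_mul, sub_zero]
          exact hPm
        · rw [mul_assoc, ← mul_assoc A, hAP, sub_mul, one_mul, mul_assoc, hAA, mul_zero,
            sub_zero]
          exact hPAm
      | zero => rw [mul_zero]; exact S.zero_mem
      | add a b _ _ ha hb => rw [mul_add]; exact S.add_mem ha hb
      | smul c a _ ha => rw [mul_smul_comm]; exact S.smul_mem c ha
    | zero => rw [zero_mul]; exact S.zero_mem
    | add a b _ _ ha hb => rw [add_mul]; exact S.add_mem ha hb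
    | smul c a _ ha => rw [smul_mul_assoc]; exact S.smul_mem c ha
  have hall : ∀ y : FreeAlgebra K (Fin 2), mk y ∈ S := by
    intro y
    induction y using FreeAlgebra.induction with
    | grade0 c =>
      rw [AlgHom.commutes, Algebra.algebraMap_eq_smul_one]
      exact S.smul_mem c h1
    | grade1 i =>
      fin_cases i
      · exact hAm
      · exact hPm
    | mul x y hx hy => rw [map_mul]; exact hmul _ hx _ hy
    | add x y hx hy => rw [map_add]; exact S.add_mem hx hy
  have hspan : ⊤ ≤ S := by
    intro x _
    obtain ⟨y, rfl⟩ := RingQuot.mkAlgHom_surjective K (Rel3 K) x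
    exact hall y
  refine ⟨Module.Basis.mk hli hspan, ?_, ?_, ?_, ?_⟩ <;>
    simp [Module.Basis.mk_apply, hv]
end

section
/- Let B = K⟨a_i, a_i^+ : 1 ≤ i ≤ n⟩ / I where I contains a set of generators of the form Σ_i α_i a_i a_i^+ + Σ_i β_i a_i^+ a_i − λ with λ ≠ 0, and suppose there exist N_i ∈ B with [N_i, a_j] = -δ_{ij} a_j and [N_i, a_j^+] = δ_{ij} a_j^+. Then for every commutative K-algebra C, the only K-algebra homomorphism from B to C is the zero map; in particular there is no unital K-algebra homomorphism B → C. -/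
theorem stmt_4_aux (K : Type*) [Field K] (n : ℕ)
    (B : Type*) [Ring B] [Algebra K B]
    (a ap N : Fin n → B) (α β : Fin n → K) (lam : K) (hlam : lam ≠ 0)
    (hgen : Algebra.adjoin K (Set.range a ∪ Set.range ap) = ⊤)
    (hrel : ∑ i, α i • (a i * ap i) + ∑ i, β i • (ap i * a i) = lam • (1 : B))
    (h1 : ∀ i j, N i * a j - a j * N i = if i = j then -a j else 0)
    (h2 : ∀ i j, N i * ap j - ap j * N i = if i = j then ap j else 0)
    (C : Type*) [CommRing C] [Algebra K C] (φ : B →ₙₐ[K] C) : ∀ x, φ x = 0 := by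
  have ha : ∀ i, φ (a i) = 0 := by
    intro i
    have := congrArg φ (h1 i i)
    simp only [if_pos rfl, if_true, map_sub, map_mul, map_neg] at this
    rw [mul_comm, sub_self] at this
    exact neg_eq_zero.mp this.symm
  have hap : ∀ i, φ (ap i) = 0 := by
    intro i
    have := congrArg φ (h2 i i)
    simp only [if_pos rfl, if_true, map_sub, map_mul] at this
    rw [mul_comm, sub_self] at this
    exact this.symm
  have h1' : φ 1 = 0 := by
    have := congrArg φ hrel
    simp only [map_add, map_sum, map_smul, map_mul, ha, hap, zero_mul, mul_zero,
      smul_zero, Finset.sum_const_zero, add_zero] at this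
    rcases smul_eq_zero.mp this.symm with h | h
    · exact absurd h hlam
    · exact h
  let S : Subalgebra K B :=
    { carrier := {x | φ x = 0}
      add_mem' := fun hx hy => by simp_all [Set.mem_setOf_eq, map_add]
      mul_mem' := fun hx hy => by simp_all [Set.mem_setOf_eq, map_mul]
      algebraMap_mem' := fun r => by
        show φ (algebraMap K B r) = 0
        rw [Algebra.algebraMap_eq_smul_one, map_smul, h1', smul_zero] }
  have hle : Algebra.adjoin K (Set.range a ∪ Set.range ap) ≤ S := by
    apply Algebra.adjoin_le
    rintro x (⟨i, rfl⟩ | ⟨i, rfl⟩)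
    · exact ha i
    · exact hap i
  intro x
  exact hle (hgen ▸ Algebra.mem_top)

/-- If `B` is a `K`-algebra generated by the `a i`, `ap i`, with number operators `N i`
and a relation `Σ α i (a i)(ap i) + Σ β i (ap i)(a i) = λ·1` with `λ ≠ 0`, then the only
(not necessarily unital) `K`-algebra homomorphism from `B` to a commutative `K`-algebra
is zero; in particular there is no unital `K`-algebra homomorphism `B → C` for `C`
nonzero commutative. -/
theorem stmt_4 (K : Type*) [Field K] [CharZero K] (n : ℕ)
    (B : Type*) [Ring B] [Algebra K B]
    (a ap N : Fin n → B) (α β : Fin n → K) (lam : K) (hlam : lam ≠ 0)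
    (hgen : Algebra.adjoin K (Set.range a ∪ Set.range ap) = ⊤)
    (hrel : ∑ i, α i • (a i * ap i) + ∑ i, β i • (ap i * a i) = lam • (1 : B))
    (h1 : ∀ i j, N i * a j - a j * N i = if i = j then -a j else 0)
    (h2 : ∀ i j, N i * ap j - ap j * N i = if i = j then ap j else 0) :
    (∀ (C : Type*) [CommRing C] [Algebra K C] (φ : B →ₙₐ[K] C), φ = 0) ∧
    (∀ (C : Type*) [CommRing C] [Algebra K C] [Nontrivial C], IsEmpty (B →ₐ[K] C)) := by
  constructor
  · intro C _ _ φ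
    ext x
    exact stmt_4_aux K n B a ap N α β lam hlam hgen hrel h1 h2 C φ x
  · intro C _ _ _
    constructor
    intro φ
    have := stmt_4_aux K n B a ap N α β lam hlam hgen hrel h1 h2 C φ.toNonUnitalAlgHom 1
    rw [show ((φ.toNonUnitalAlgHom : B →ₙₐ[K] C) 1) = φ 1 from rfl, map_one] at this
    exact one_ne_zero this
end

section
/- Let B = K⟨a_i, a_i^+ : i⟩ / I where I is generated by relations making all a_i a_i^+ equal to a central element x, all a_i^+ a_i equal (denote a_i^+ a_i = y_i, with each y_i central), and such that every monomial of total i-number zero can be rewritten, by commuting elements with distinct indices, so that each factor pairs with its conjugate. Then the zero-graded component B^0 (the span of monomials containing equally many a_i and a_i^+ for each i) is contained in the center Z(B). -/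
section Aux

variable {I : Type*} [DecidableEq I]

/-- First occurrence of an index-`i` letter. -/
lemma first_i (i : I) : ∀ (t : List (I × Bool)), (∃ c, (i, c) ∈ t) →
    ∃ m b v, t = m ++ (i, b) :: v ∧ ∀ p ∈ m, p.1 ≠ i := by
  intro t
  induction t with
  | nil => rintro ⟨c, hc⟩; simp at hc
  | cons p t ih =>
    rintro ⟨c, hc⟩
    by_cases hp : p.1 = i
    · obtain ⟨pi, pc⟩ := p
      simp only at hp; subst hp
      exact ⟨[], pc, t, by simp, by simp⟩
    · have ht : ∃ c, (i, c) ∈ t := by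
        refine ⟨c, ?_⟩
        rcases List.mem_cons.mp hc with h | h
        · exact absurd (by rw [← h]) hp
        · exact h
      obtain ⟨m, b, v, ht, hm⟩ := ih ht
      refine ⟨p :: m, b, v, by rw [ht]; simp, ?_⟩
      intro q hq
      rcases List.mem_cons.mp hq with h | h
      · rw [h]; exact hp
      · exact hm q h

/-- Find an "innermost" pair `(i,b'), (i,!b')` separated only by letters of other
indices. -/
lemma find_pair (i : I) : ∀ (w : List (I × Bool)) (b : Bool),
    (i, b) ∈ w → (i, !b) ∈ w →
    ∃ u b' m v, w = u ++ (i, b') :: m ++ (i, !b') :: v ∧ ∀ p ∈ m, p.1 ≠ i := by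
  intro w
  induction w with
  | nil => intro b hb; simp at hb
  | cons p t ih =>
    intro b hb hnb
    by_cases hp : p.1 = i
    · obtain ⟨pi, pc⟩ := p
      simp only at hp; subst hp
      by_cases hc : (pi, !pc) ∈ t
      · by_cases hcc : (pi, pc) ∈ t
        · obtain ⟨u, b', m, v, htd, hm⟩ := ih pc hcc hc
          exact ⟨(pi, pc) :: u, b', m, v, by rw [htd]; simp, hm⟩
        · obtain ⟨m, b2, v, htd, hm⟩ := first_i pi t ⟨!pc, hc⟩
          have hb2 : b2 = !pc := by
            cases b2 <;> cases pc <;> simp_all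
          subst hb2
          exact ⟨[], pc, m, v, by rw [htd]; simp, hm⟩
      · exfalso
        have hmem : (pi, !pc) ∈ (pi, pc) :: t := by
          cases pc <;> cases b <;> simp_all
        rcases List.mem_cons.mp hmem with h | h
        · simp at h
        · exact hc h
    · have hb' : (i, b) ∈ t := by
        rcases List.mem_cons.mp hb with h | h
        · exact absurd (by rw [← h]) hp
        · exact h
      have hnb' : (i, !b) ∈ t := by
        rcases List.mem_cons.mp hnb with h | h
        · exact absurd (by rw [← h]) hp
        · exact h
      obtain ⟨u, b', m, v, htd, hm⟩ := ih b hb' hnb'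
      exact ⟨p :: u, b', m, v, by rw [htd]; simp, hm⟩

/-- Removing a balanced pair keeps the word balanced. -/
lemma bal_rest (i : I) (b' : Bool) (u m v : List (I × Bool))
    (hbal : ∀ j, (u ++ (i, b') :: m ++ (i, !b') :: v).count (j, true)
      = (u ++ (i, b') :: m ++ (i, !b') :: v).count (j, false)) :
    ∀ j, (u ++ m ++ v).count (j, true) = (u ++ m ++ v).count (j, false) := by
  intro j
  have h := hbal j
  simp only [List.count_append, List.count_cons, beq_iff_eq, Prod.mk.injEq] at h ⊢
  by_cases hji : i = j
  · subst hji
    cases b' <;> simp at h <;> omega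
  · simp only [hji, false_and, if_false] at h
    omega

lemma len_rest (i : I) (b' : Bool) (u m v w : List (I × Bool)) (n : ℕ)
    (hde : w = u ++ (i, b') :: m ++ (i, !b') :: v) (hw : w.length ≤ n + 1) :
    (u ++ m ++ v).length ≤ n := by
  subst hde
  simp only [List.length_append, List.length_cons] at hw ⊢
  omega

/-- Pure ring-theoretic shuffle identity. -/
lemma shuffle {B : Type*} [Ring B] (U M V x y : B) (hcm : x * M = M * x)
    (hcomm : ∀ g, g * (x * y) = (x * y) * g) :
    U * (x * M) * (y * V) = x * y * (U * M * V) := by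
  calc U * (x * M) * (y * V)
      = U * (M * x) * (y * V) := by rw [hcm]
    _ = (U * M) * x * (y * V) := by rw [← mul_assoc U M x]
    _ = (U * M) * (x * (y * V)) := by rw [mul_assoc (U * M) x]
    _ = (U * M) * ((x * y) * V) := by rw [← mul_assoc x y V]
    _ = ((U * M) * (x * y)) * V := by rw [← mul_assoc (U * M)]
    _ = ((x * y) * (U * M)) * V := by rw [hcomm (U * M)]
    _ = x * y * (U * M * V) := by rw [mul_assoc (x * y)]

end Aux

/-- Suppose in `B`: (i) all `a_i a_i^+` are equal and central; (ii) each `a_i^+ a_i`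
is central; (iii) generators with distinct indices commute. Then every monomial of
total `i`-number zero (a word in the generators in which, for each index `i`, `a_i`
occurs as many times as `a_i^+`) is central; i.e. `B⁰ ⊆ Z(B)`. Words are encoded as
lists of pairs `(i, b)` with `b = true` for `a_i^+` and `b = false` for `a_i`. -/
theorem stmt_11 (K : Type*) [Field K] [CharZero K] (I : Type*) [DecidableEq I]
    (B : Type*) [Ring B] [Algebra K B]
    (a ap : I → B)
    (hx : ∀ i j, a i * ap i = a j * ap j)
    (hxc : ∀ i, a i * ap i ∈ Set.center B)
    (hyc : ∀ i, ap i * a i ∈ Set.center B)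
    (hcomm1 : ∀ i j, i ≠ j → a i * a j = a j * a i)
    (hcomm2 : ∀ i j, i ≠ j → a i * ap j = ap j * a i)
    (hcomm3 : ∀ i j, i ≠ j → ap i * ap j = ap j * ap i) :
    ∀ w : List (I × Bool),
      (∀ i, w.count (i, true) = w.count (i, false)) →
      (w.map (fun p => if p.2 then ap p.1 else a p.1)).prod ∈ Set.center B := by
  set F : I × Bool → B := fun p => if p.2 then ap p.1 else a p.1 with hF
  -- letters of distinct indices commute
  have hlc : ∀ p q : I × Bool, p.1 ≠ q.1 → F p * F q = F q * F p := by
    rintro ⟨i, bi⟩ ⟨j, bj⟩ hij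
    simp only at hij
    cases bi <;> cases bj <;> simp only [hF, if_true, if_false]
    · exact hcomm1 i j hij
    · exact hcomm2 i j hij
    · exact (hcomm2 j i hij.symm).symm
    · exact hcomm3 i j hij
  -- a letter commutes with the product of a word avoiding its index
  have hpc : ∀ (i : I) (b : Bool) (m : List (I × Bool)), (∀ p ∈ m, p.1 ≠ i) →
      F (i, b) * (m.map F).prod = (m.map F).prod * F (i, b) := by
    intro i b m
    induction m with
    | nil => simp
    | cons q m ih =>
      intro hm
      have hq : q.1 ≠ i := hm q (by simp)
      have h1 : F (i, b) * F q = F q * F (i, b) := hlc (i, b) q (fun h => hq h.symm)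
      have h2 := ih (fun p hp => hm p (by simp [hp]))
      simp only [List.map_cons, List.prod_cons]
      rw [← mul_assoc, h1, mul_assoc, h2, mul_assoc]
  -- the pair `F (i,b) * F (i,!b)` is central
  have hpair : ∀ (i : I) (b : Bool), F (i, b) * F (i, !b) ∈ Set.center B := by
    intro i b
    cases b
    · simpa [hF] using hxc i
    · simpa [hF] using hyc i
  -- main induction on an upper bound for the length
  have main : ∀ n (w : List (I × Bool)), w.length ≤ n →
      (∀ i, w.count (i, true) = w.count (i, false)) →
      (w.map F).prod ∈ Set.center B := by
    intro n
    induction n with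
    | zero =>
      intro w hw _
      have : w = [] := List.eq_nil_of_length_eq_zero (Nat.le_zero.mp hw)
      subst this
      simpa using Set.one_mem_center
    | succ n ih =>
      intro w hw hbal
      match w with
      | [] => simpa using Set.one_mem_center
      | p :: t =>
        obtain ⟨i, b⟩ := p
        have hmemb : (i, b) ∈ (i, b) :: t := by simp
        have hb1 : 0 < ((i, b) :: t).count (i, b) := List.count_pos_iff.mpr hmemb
        have heq : ((i, b) :: t).count (i, !b) = ((i, b) :: t).count (i, b) := by
          cases b
          · exact hbal i
          · exact (hbal i).symm
        have hmemnb : (i, !b) ∈ (i, b) :: t := List.count_pos_iff.mp (heq ▸ hb1)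
        obtain ⟨u, b', m, v, hde, hm⟩ := find_pair i ((i, b) :: t) b hmemb hmemnb
        have hc : F (i, b') * F (i, !b') ∈ Set.center B := hpair i b'
        have hcm := hpc i b' m hm
        have hcomm := Semigroup.mem_center_iff.mp hc
        have hprod : (((i, b) :: t).map F).prod
            = (F (i, b') * F (i, !b')) * (((u ++ m ++ v).map F).prod) := by
          rw [hde]
          simp only [List.map_append, List.map_cons, List.prod_append, List.prod_cons]
          exact shuffle _ _ _ _ _ hcm hcomm
        rw [hprod]
        exact Set.mul_mem_center hc
          (ih (u ++ m ++ v) (len_rest i b' u m v _ n hde hw) (bal_rest i b' u m v (hde ▸ hbal)))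
  intro w hbal
  exact main w.length w le_rfl hbal
end

section
/- Let B = K⟨a, a^+⟩/⟨a a^+ − q a^+ a − 1⟩ be the q-boson algebra with q ∈ K, q ≠ 1, and q not a root of unity. In the completion of B with respect to the left ideals V_n = B·a^n, the element N := Σ_{k=1}^∞ ((1−q)^k / (1−q^k)) (a^+)^k a^k satisfies [N, a] = −a and [N, a^+] = a^+. -/
set_option linter.unusedSectionVars false

section
variable {K : Type*} [Field K] [CharZero K]
  {B : Type*} [Ring B] [Algebra K B]
  (a ap : B) (q : K)

lemma aux_aap (hrel : a * ap = q • (ap * a) + 1) (hq1 : q ≠ 1) (k : ℕ) :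
    a * ap ^ (k+1)
      = q ^ (k+1) • (ap ^ (k+1) * a) + ((1 - q ^ (k+1))/(1-q)) • ap ^ k := by
  have hq0 : (1 : K) - q ≠ 0 := sub_ne_zero.mpr (Ne.symm hq1)
  induction k with
  | zero => simpa [div_self hq0] using hrel
  | succ k ih =>
    have h1 : a * ap ^ (k+2) = (a * ap) * ap ^ (k+1) := by
      rw [mul_assoc, ← pow_succ']
    have hs : q * ((1 - q^(k+1))/(1-q)) + 1 = (1 - q^(k+1+1))/(1-q) := by
      field_simp
      ring
    rw [h1, hrel, add_mul, one_mul, smul_mul_assoc, mul_assoc, ih]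
    rw [mul_add, mul_smul_comm, mul_smul_comm, smul_add, smul_smul, smul_smul,
      ← mul_assoc, ← pow_succ' ap (k+1), ← pow_succ' ap k, ← pow_succ' q (k+1),
      ← hs, add_smul, one_smul, ← add_assoc]

lemma aux_apow (hrel : a * ap = q • (ap * a) + 1) (hq1 : q ≠ 1) (k : ℕ) :
    a ^ (k+1) * ap
      = q ^ (k+1) • (ap * a ^ (k+1)) + ((1 - q ^ (k+1))/(1-q)) • a ^ k := by
  have hq0 : (1 : K) - q ≠ 0 := sub_ne_zero.mpr (Ne.symm hq1)
  induction k with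
  | zero => simpa [div_self hq0] using hrel
  | succ k ih =>
    have h1 : a ^ (k+2) * ap = a * (a ^ (k+1) * ap) := by
      rw [← mul_assoc, ← pow_succ']
    have hs : q ^ (k+1) + (1 - q^(k+1))/(1-q) = (1 - q^(k+1+1))/(1-q) := by
      field_simp
      ring
    rw [h1, ih, mul_add, mul_smul_comm, mul_smul_comm, ← mul_assoc, hrel,
      add_mul, one_mul, smul_mul_assoc, mul_assoc, ← pow_succ' a (k+1),
      ← pow_succ' a k, smul_add, smul_smul]
    rw [show q ^ (k+1) * q = q ^ (k+1+1) by rw [← pow_succ]]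
    rw [← hs, add_smul, ← add_assoc]

lemma tele_a (hrel : a * ap = q • (ap * a) + 1)
    (hq : ∀ k : ℕ, 1 ≤ k → q ^ k ≠ 1) (n : ℕ) :
    (∑ k ∈ Finset.Icc 1 n, ((1 - q) ^ k / (1 - q ^ k)) • (ap ^ k * a ^ k)) * a
      - a * (∑ k ∈ Finset.Icc 1 n, ((1 - q) ^ k / (1 - q ^ k)) • (ap ^ k * a ^ k))
      = (1-q)^n • (ap ^ n * a ^ (n+1)) - a := by
  have hq1 : q ≠ 1 := by simpa using hq 1 le_rfl
  have hq0 : (1 : K) - q ≠ 0 := sub_ne_zero.mpr (Ne.symm hq1)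
  induction n with
  | zero => simp
  | succ n ih =>
    have hqn : (1 : K) - q ^ (n+1) ≠ 0 :=
      sub_ne_zero.mpr (Ne.symm (hq (n+1) (Nat.le_add_left 1 n)))
    set S := ∑ k ∈ Finset.Icc 1 n, ((1 - q) ^ k / (1 - q ^ k)) • (ap ^ k * a ^ k) with hS
    set c : K := (1 - q) ^ (n+1) / (1 - q ^ (n+1)) with hc
    set T := ap ^ (n+1) * a ^ (n+1) with hT
    have hsum : (∑ k ∈ Finset.Icc 1 (n+1), ((1 - q) ^ k / (1 - q ^ k)) • (ap ^ k * a ^ k))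
        = S + c • T := by
      rw [Finset.sum_Icc_succ_top (Nat.le_add_left 1 n)]
    have hTa : T * a = ap ^ (n+1) * a ^ (n+1+1) := by
      rw [hT, mul_assoc, ← pow_succ]
    have haT : a * T = q ^ (n+1) • (ap ^ (n+1) * a ^ (n+1+1))
        + ((1 - q ^ (n+1))/(1-q)) • (ap ^ n * a ^ (n+1)) := by
      rw [hT, ← mul_assoc, aux_aap a ap q hrel hq1 n, add_mul, smul_mul_assoc,
        smul_mul_assoc, mul_assoc, ← pow_succ']
    have expand : (S + c • T) * a - a * (S + c • T)
        = (S * a - a * S) + (c • (T * a) - c • (a * T)) := by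
      rw [add_mul, mul_add, smul_mul_assoc, mul_smul_comm]
      abel
    have hqn' : (1 : K) - q * q ^ n ≠ 0 := by rw [← pow_succ']; exact hqn
    rw [hsum, expand, ih, hTa, haT]
    match_scalars <;> (try simp only [hc]) <;> field_simp <;> ring

lemma tele_ap (hrel : a * ap = q • (ap * a) + 1)
    (hq : ∀ k : ℕ, 1 ≤ k → q ^ k ≠ 1) (n : ℕ) :
    (∑ k ∈ Finset.Icc 1 n, ((1 - q) ^ k / (1 - q ^ k)) • (ap ^ k * a ^ k)) * ap
      - ap * (∑ k ∈ Finset.Icc 1 n, ((1 - q) ^ k / (1 - q ^ k)) • (ap ^ k * a ^ k))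
      = ap - (1-q)^n • (ap ^ (n+1) * a ^ n) := by
  have hq1 : q ≠ 1 := by simpa using hq 1 le_rfl
  have hq0 : (1 : K) - q ≠ 0 := sub_ne_zero.mpr (Ne.symm hq1)
  induction n with
  | zero => simp
  | succ n ih =>
    have hqn : (1 : K) - q ^ (n+1) ≠ 0 :=
      sub_ne_zero.mpr (Ne.symm (hq (n+1) (Nat.le_add_left 1 n)))
    set S := ∑ k ∈ Finset.Icc 1 n, ((1 - q) ^ k / (1 - q ^ k)) • (ap ^ k * a ^ k) with hS
    set c : K := (1 - q) ^ (n+1) / (1 - q ^ (n+1)) with hc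
    set T := ap ^ (n+1) * a ^ (n+1) with hT
    have hsum : (∑ k ∈ Finset.Icc 1 (n+1), ((1 - q) ^ k / (1 - q ^ k)) • (ap ^ k * a ^ k))
        = S + c • T := by
      rw [Finset.sum_Icc_succ_top (Nat.le_add_left 1 n)]
    have hapT : ap * T = ap ^ (n+1+1) * a ^ (n+1) := by
      rw [hT, ← mul_assoc, ← pow_succ']
    have hTap : T * ap = q ^ (n+1) • (ap ^ (n+1+1) * a ^ (n+1))
        + ((1 - q ^ (n+1))/(1-q)) • (ap ^ (n+1) * a ^ n) := by
      rw [hT, mul_assoc, aux_apow a ap q hrel hq1 n, mul_add, mul_smul_comm,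
        mul_smul_comm, ← mul_assoc, ← pow_succ]
    have expand : (S + c • T) * ap - ap * (S + c • T)
        = (S * ap - ap * S) + (c • (T * ap) - c • (ap * T)) := by
      rw [add_mul, mul_add, smul_mul_assoc, mul_smul_comm]
      abel
    have hqn' : (1 : K) - q * q ^ n ≠ 0 := by rw [← pow_succ']; exact hqn
    rw [hsum, expand, ih, hapT, hTap]
    match_scalars <;> (try simp only [hc]) <;> field_simp <;> ring

end

/-- In the `q`-boson algebra (`a a⁺ = q a⁺ a + 1`, `q` not a root of unity), the element
`N = Σ_{k=1}^∞ ((1-q)^k/(1-q^k)) (a⁺)^k a^k` of the completion with respect to the left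
ideals `V n = B·aⁿ` satisfies `[N, a] = -a` and `[N, a⁺] = a⁺`: the partial sums
`S n = Σ_{k=1}^n ((1-q)^k/(1-q^k)) (a⁺)^k a^k` satisfy `[S n, a] + a → 0` and
`[S n, a⁺] - a⁺ → 0` in the topology defined by the `V m`. -/
theorem stmt_12 (K : Type*) [Field K] [CharZero K]
    (B : Type*) [Ring B] [Algebra K B]
    (a ap : B) (q : K) (hq : ∀ k : ℕ, 1 ≤ k → q ^ k ≠ 1)
    (hrel : a * ap = q • (ap * a) + 1) :
    ∀ m : ℕ, ∃ n₀ : ℕ, ∀ n, n₀ ≤ n →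
      (((∑ k ∈ Finset.Icc 1 n, ((1 - q) ^ k / (1 - q ^ k)) • (ap ^ k * a ^ k)) * a
        - a * (∑ k ∈ Finset.Icc 1 n, ((1 - q) ^ k / (1 - q ^ k)) • (ap ^ k * a ^ k)) + a)
        ∈ Submodule.span B ({a ^ m} : Set B)) ∧
      (((∑ k ∈ Finset.Icc 1 n, ((1 - q) ^ k / (1 - q ^ k)) • (ap ^ k * a ^ k)) * ap
        - ap * (∑ k ∈ Finset.Icc 1 n, ((1 - q) ^ k / (1 - q ^ k)) • (ap ^ k * a ^ k)) - ap)
        ∈ Submodule.span B ({a ^ m} : Set B)) := by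
  intro m
  refine ⟨m, fun n hn => ⟨?_, ?_⟩⟩
  · rw [tele_a a ap q hrel hq n, sub_add_cancel]
    have hpow : a ^ (n+1) = a ^ (n+1-m) * a ^ m := by
      rw [← pow_add, Nat.sub_add_cancel (le_trans hn (Nat.le_succ n))]
    rw [hpow, ← mul_assoc, ← smul_mul_assoc]
    exact Submodule.smul_mem _ _ (Submodule.mem_span_singleton_self _)
  · rw [tele_ap a ap q hrel hq n]
    have hpow : a ^ n = a ^ (n-m) * a ^ m := by
      rw [← pow_add, Nat.sub_add_cancel hn]
    rw [sub_sub_cancel_left, hpow, ← mul_assoc, ← smul_mul_assoc]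
    exact Submodule.neg_mem _ (Submodule.smul_mem _ _ (Submodule.mem_span_singleton_self _))
end

section
/- Let A_1 be the Weyl algebra and C_fermion = A, where A is generated by ξ_i, ξ_i^+ (i ∈ I) with relations ξ_i ξ_j + ξ_j ξ_i = 0 and ξ_i^+ ξ_j^+ + ξ_j^+ ξ_i^+ = 0 for i ≠ j, and ξ_i ξ_i^+ = ξ_i^+ ξ_i = 1. In the tensor product algebra B̄ = A ⊗_K A_1, the elements b_i := ξ_i ⊗ a and b_i^+ := ξ_i^+ ⊗ a^+ satisfy: b_i b_j + b_j b_i = 0 and b_i^+ b_j^+ + b_j^+ b_i^+ = 0 for i ≠ j; b_i^+ b_i = b_j^+ b_j and b_i b_i^+ = b_j b_j^+ for all i, j; and b_i b_i^+ − b_i^+ b_i = 1. -/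
open scoped TensorProduct

/-- Let `A` carry elements `ξ_i, ξ_i^+` with `ξ_i ξ_j + ξ_j ξ_i = 0`,
`ξ_i^+ ξ_j^+ + ξ_j^+ ξ_i^+ = 0` (`i ≠ j`) and `ξ_i ξ_i^+ = ξ_i^+ ξ_i = 1`, and let
`A₁` carry `a, a⁺` with `a a⁺ - a⁺ a = 1` (Weyl algebra). In `B̄ = A ⊗[K] A₁`, the
elements `b_i = ξ_i ⊗ a` and `b_i^+ = ξ_i^+ ⊗ a⁺` anticommute for distinct indices,
the products `b_i^+ b_i` (resp. `b_i b_i^+`) are independent of `i`, and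
`b_i b_i^+ - b_i^+ b_i = 1`. -/
theorem stmt_19 (K : Type*) [Field K] [CharZero K] (I : Type*)
    (A A₁ : Type*) [Ring A] [Algebra K A] [Ring A₁] [Algebra K A₁]
    (ξ ξp : I → A) (a ap : A₁)
    (hξ : ∀ i j, i ≠ j → ξ i * ξ j + ξ j * ξ i = 0)
    (hξp : ∀ i j, i ≠ j → ξp i * ξp j + ξp j * ξp i = 0)
    (hu1 : ∀ i, ξ i * ξp i = 1) (hu2 : ∀ i, ξp i * ξ i = 1)
    (hccr : a * ap - ap * a = 1) :
    ∀ i j : I,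
      (i ≠ j → (ξ i ⊗ₜ[K] a) * (ξ j ⊗ₜ[K] a) + (ξ j ⊗ₜ[K] a) * (ξ i ⊗ₜ[K] a)
        = (0 : A ⊗[K] A₁)) ∧
      (i ≠ j → (ξp i ⊗ₜ[K] ap) * (ξp j ⊗ₜ[K] ap) + (ξp j ⊗ₜ[K] ap) * (ξp i ⊗ₜ[K] ap)
        = (0 : A ⊗[K] A₁)) ∧
      ((ξp i ⊗ₜ[K] ap) * (ξ i ⊗ₜ[K] a) = (ξp j ⊗ₜ[K] ap) * (ξ j ⊗ₜ[K] a)) ∧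
      ((ξ i ⊗ₜ[K] a) * (ξp i ⊗ₜ[K] ap) = (ξ j ⊗ₜ[K] a) * (ξp j ⊗ₜ[K] ap)) ∧
      ((ξ i ⊗ₜ[K] a) * (ξp i ⊗ₜ[K] ap) - (ξp i ⊗ₜ[K] ap) * (ξ i ⊗ₜ[K] a)
        = (1 : A ⊗[K] A₁)) := by
  intro i j
  refine ⟨fun h => ?_, fun h => ?_, ?_, ?_, ?_⟩
  · rw [Algebra.TensorProduct.tmul_mul_tmul, Algebra.TensorProduct.tmul_mul_tmul,
      ← TensorProduct.add_tmul, hξ i j h, TensorProduct.zero_tmul]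
  · rw [Algebra.TensorProduct.tmul_mul_tmul, Algebra.TensorProduct.tmul_mul_tmul,
      ← TensorProduct.add_tmul, hξp i j h, TensorProduct.zero_tmul]
  · rw [Algebra.TensorProduct.tmul_mul_tmul, Algebra.TensorProduct.tmul_mul_tmul,
      hu2 i, hu2 j]
  · rw [Algebra.TensorProduct.tmul_mul_tmul, Algebra.TensorProduct.tmul_mul_tmul,
      hu1 i, hu1 j]
  · rw [Algebra.TensorProduct.tmul_mul_tmul, Algebra.TensorProduct.tmul_mul_tmul,
      hu1 i, hu2 i, ← TensorProduct.tmul_sub, hccr,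
      Algebra.TensorProduct.one_def]
end
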